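/- Let S and T be multisets of rational numbers such that for every μ ∈ ℚ, card(T^{≥μ}) ≤ card(S^{≥μ}). Then there exist multisets U, S', T' of rationals with S = U + S' and T = U + T' such that: (a) for every μ ∈ ℚ, card(T'^{≥μ}) ≤ card(S'^{≥μ}); (b) if T' is nonempty then S' is nonempty and the maximum element of S' is strictly greater than the maximum element of T'; (c) if U and T' are both nonempty then every element of S' is less than or equal to every element of U. -/

import Mathlib

/-!
Induct on `T`. If `T = 0` or `max S > max T`, the trivial decomposition `U = 0` works.
Otherwise dominance at `μ = max T` forces `max S = max T =: a`; cancelling one copy of `a`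
from both sides preserves dominance, and `a` is prepended to the common factor `U` of the
decomposition of the smaller pair. Since `a = max S`, it bounds every element of `S'`.
-/

namespace Multiset

variable {α : Type*} [LinearOrder α]

def SlopewiseDominates (S T : Multiset α) : Prop :=
  ∀ μ : α, (T.filter fun t => μ ≤ t).card ≤ (S.filter fun s => μ ≤ s).card

theorem slopewiseDominates_cons_cons_iff {S T : Multiset α} (a : α) :
    SlopewiseDominates (a ::ₘ S) (a ::ₘ T) ↔ SlopewiseDominates S T := by
  simp only [SlopewiseDominates, ← countP_eq_card_filter, countP_cons, Nat.add_le_add_iff_right]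

theorem SlopewiseDominates.exists_ge {S T : Multiset α} (h : SlopewiseDominates S T) {t : α}
    (ht : t ∈ T) : ∃ s ∈ S, t ≤ s := by
  have hcount := h t
  rw [← countP_eq_card_filter, ← countP_eq_card_filter] at hcount
  exact countP_pos.1 ((countP_pos.2 ⟨t, ht, le_rfl⟩).trans_le hcount)

structure IsMaxCommonFactorDecomp (S T U S' T' : Multiset α) : Prop where
  left_eq : S = U + S'
  right_eq : T = U + T'
  slopewiseDominates : SlopewiseDominates S' T'
  exists_gt_of_ne_zero : T' ≠ 0 → S' ≠ 0 ∧ ∃ m ∈ S', ∀ t ∈ T', t < m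
  le_of_ne_zero : U ≠ 0 → T' ≠ 0 → ∀ s ∈ S', ∀ u ∈ U, s ≤ u

namespace IsMaxCommonFactorDecomp

theorem of_exists_gt {S T : Multiset α} (h : SlopewiseDominates S T)
    (hgt : T ≠ 0 → ∃ m ∈ S, ∀ t ∈ T, t < m) : IsMaxCommonFactorDecomp S T 0 S T where
  left_eq := (zero_add S).symm
  right_eq := (zero_add T).symm
  slopewiseDominates := h
  exists_gt_of_ne_zero hT := by
    obtain ⟨m, hm, hlt⟩ := hgt hT
    exact ⟨ne_of_mem_of_not_mem' hm (notMem_zero m), m, hm, hlt⟩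
  le_of_ne_zero hU := absurd rfl hU

theorem cons {S T U S' T' : Multiset α} (h : IsMaxCommonFactorDecomp S T U S' T') {a : α}
    (ha : ∀ s ∈ S, s ≤ a) :
    IsMaxCommonFactorDecomp (a ::ₘ S) (a ::ₘ T) (a ::ₘ U) S' T' where
  left_eq := by rw [h.left_eq, cons_add]
  right_eq := by rw [h.right_eq, cons_add]
  slopewiseDominates := h.slopewiseDominates
  exists_gt_of_ne_zero := h.exists_gt_of_ne_zero
  le_of_ne_zero _ hT' s hs u hu := by
    rcases mem_cons.1 hu with rfl | hu
    · exact ha s (h.left_eq ▸ mem_add.2 (Or.inr hs))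
    · exact h.le_of_ne_zero (ne_of_mem_of_not_mem' hu (notMem_zero u)) hT' s hs u hu

end IsMaxCommonFactorDecomp

theorem SlopewiseDominates.exists_isMaxCommonFactorDecomp {S T : Multiset α}
    (h : SlopewiseDominates S T) : ∃ U S' T', IsMaxCommonFactorDecomp S T U S' T' := by
  induction T using strongInductionOn generalizing S with
  | ih T ih =>
    by_cases hT : T = 0
    · exact ⟨0, S, T, .of_exists_gt h (absurd hT ·)⟩
    obtain ⟨a, haT, hTa⟩ := T.exists_max_image id hT
    obtain ⟨s, hsS, has⟩ := h.exists_ge haT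
    obtain ⟨m, hmS, hSm⟩ := S.exists_max_image id (ne_of_mem_of_not_mem' hsS (notMem_zero s))
    rcases (has.trans (hSm s hsS)).lt_or_eq with hlt | rfl
    · exact ⟨0, S, T, .of_exists_gt h fun _ =>
        ⟨m, hmS, fun t ht => (hTa t ht).trans_lt hlt⟩⟩
    obtain ⟨S₀, rfl⟩ := exists_cons_of_mem hmS
    obtain ⟨T₀, rfl⟩ := exists_cons_of_mem haT
    obtain ⟨U, S', T', hd⟩ :=
      ih T₀ (lt_cons_self T₀ a) ((slopewiseDominates_cons_cons_iff a).1 h)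
    exact ⟨a ::ₘ U, S', T', hd.cons fun s hs => hSm s (mem_cons_of_mem hs)⟩

end Multiset

/-- existence of the maximal common factor decomposition. If `S`
slopewise dominates `T` (i.e. `card(T^{≥μ}) ≤ card(S^{≥μ})` for all `μ`), then there
are decompositions `S = U + S'`, `T = U + T'` such that `S'` slopewise dominates `T'`,
`max S' > max T'` when `T' ≠ 0`, and every element of `S'` is at most every element
of `U` when `U, T' ≠ 0`. -/
theorem maximal_common_factor_decomposition
    (S T : Multiset ℚ)
    (h : ∀ μ : ℚ, (T.filter fun t => μ ≤ t).card ≤ (S.filter fun s => μ ≤ s).card) :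
    ∃ U S' T' : Multiset ℚ,
      S = U + S' ∧ T = U + T' ∧
      (∀ μ : ℚ, (T'.filter fun t => μ ≤ t).card ≤ (S'.filter fun s => μ ≤ s).card) ∧
      (T' ≠ 0 → S' ≠ 0 ∧ ∃ m ∈ S', ∀ t ∈ T', t < m) ∧
      (U ≠ 0 → T' ≠ 0 → ∀ s ∈ S', ∀ u ∈ U, s ≤ u) := by
  obtain ⟨U, S', T', hd⟩ := Multiset.SlopewiseDominates.exists_isMaxCommonFactorDecomp h
  exact ⟨U, S', T', hd.left_eq, hd.right_eq, hd.slopewiseDominates, hd.exists_gt_of_ne_zero,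
    hd.le_of_ne_zero⟩
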